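/- For any vector y ∈ ℝ^p and α ∈ (0,2) with β = α/(2−α), the minimum in the variational formula ‖y‖_α = min_{z ∈ ℝ_+^p} (1/2)∑_j y_j²/z_j + (1/2)‖z‖_β is uniquely attained at z_j = |y_j|^{2−α} ‖y‖_α^{α−1} for all j (when y ≠ 0). -/

import Mathlib

/-
With `θ = α / 2` and `β (2 - α) = α`, every coordinate factors as
`|y_j|^α = (y_j² / z_j)^θ (z_j^β)^(1-θ)`, so Hölder's inequality gives
`‖y‖_α² ≤ A ‖z‖_β` with `A = ∑ y_j² / z_j`, and AM-GM turns this into `‖y‖_α ≤ (A + ‖z‖_β) / 2`.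
Equality forces `A = ‖z‖_β = ‖y‖_α` together with the equality case of Hölder, i.e.
`(y_j² / z_j) / A = z_j^β / ‖z‖_β^β` for every `j`, which says `z_j^(β+1) = y_j² ‖y‖_α^(β-1)`.
This equation has one nonnegative solution, and the explicit `z` attains the bound.
-/

open scoped BigOperators ENNReal

/-- The ℓ_α quasi-norm of a vector `y ∈ ℝ^p`: `(∑ j |y j|^α)^(1/α)`. -/
noncomputable def lpQuasiNorm {p : ℕ} (α : ℝ) (y : Fin p → ℝ) : ℝ :=
  (∑ j, |y j| ^ α) ^ (1 / α)

/-- The variational objective `(1/2)∑ y_j²/z_j + (1/2)‖z‖_β`, valued in `ℝ≥0∞`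
so that `a/0 = ∞` for `a ≠ 0` and `0/0 = 0`. -/
noncomputable def varObj {p : ℕ} (β : ℝ) (y z : Fin p → ℝ) : ℝ≥0∞ :=
  (1 / 2) * ∑ j, ENNReal.ofReal (y j ^ 2) / ENNReal.ofReal (z j)
    + (1 / 2) * ENNReal.ofReal (lpQuasiNorm β z)

open Finset Real

section Holder

lemma rpow_mul_rpow_eq_mul_div_rpow_mul_div_rpow {θ a b A B : ℝ} (ha : 0 ≤ a) (hb : 0 ≤ b)
    (hA : 0 < A) (hB : 0 < B) :
    a ^ θ * b ^ (1 - θ) = A ^ θ * B ^ (1 - θ) * ((a / A) ^ θ * (b / B) ^ (1 - θ)) := by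
  rw [div_rpow ha hA.le, div_rpow hb hB.le]
  field_simp

lemma rpow_mul_rpow_le_weighted {θ a b A B : ℝ} (hθ₀ : 0 ≤ θ) (hθ₁ : θ ≤ 1) (ha : 0 ≤ a)
    (hb : 0 ≤ b) (hA : 0 < A) (hB : 0 < B) :
    a ^ θ * b ^ (1 - θ) ≤ A ^ θ * B ^ (1 - θ) * (θ * (a / A) + (1 - θ) * (b / B)) := by
  rw [rpow_mul_rpow_eq_mul_div_rpow_mul_div_rpow ha hb hA hB]
  gcongr
  exact geom_mean_le_arith_mean2_weighted hθ₀ (by linarith) (by positivity) (by positivity)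
    (by ring)

lemma rpow_mul_rpow_eq_weighted_iff {θ a b A B : ℝ} (hθ₀ : 0 < θ) (hθ₁ : θ < 1) (ha : 0 ≤ a)
    (hb : 0 ≤ b) (hA : 0 < A) (hB : 0 < B) :
    a ^ θ * b ^ (1 - θ) = A ^ θ * B ^ (1 - θ) * (θ * (a / A) + (1 - θ) * (b / B)) ↔
      a / A = b / B := by
  rw [rpow_mul_rpow_eq_mul_div_rpow_mul_div_rpow ha hb hA hB,
    mul_right_inj' (by positivity)]
  exact geom_mean_eq_arith_mean2_weighted_iff_of_pos hθ₀ (by linarith) (by positivity)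
    (by positivity) (by ring)

variable {ι : Type*} {s : Finset ι} {θ : ℝ} {a b : ι → ℝ}

lemma sum_mul_weighted_div_sum (θ : ℝ) (hA : 0 < ∑ i ∈ s, a i) (hB : 0 < ∑ i ∈ s, b i) (c : ℝ) :
    ∑ i ∈ s, c * (θ * (a i / ∑ i ∈ s, a i) + (1 - θ) * (b i / ∑ i ∈ s, b i)) = c := by
  rw [← mul_sum, sum_add_distrib, ← mul_sum, ← mul_sum, ← sum_div, ← sum_div,
    div_self hA.ne', div_self hB.ne']
  ring

theorem sum_rpow_mul_rpow_le (hθ₀ : 0 ≤ θ) (hθ₁ : θ ≤ 1) (ha : ∀ i ∈ s, 0 ≤ a i)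
    (hb : ∀ i ∈ s, 0 ≤ b i) (hA : 0 < ∑ i ∈ s, a i) (hB : 0 < ∑ i ∈ s, b i) :
    ∑ i ∈ s, a i ^ θ * b i ^ (1 - θ) ≤ (∑ i ∈ s, a i) ^ θ * (∑ i ∈ s, b i) ^ (1 - θ) := by
  conv_rhs =>
    rw [← sum_mul_weighted_div_sum θ hA hB ((∑ i ∈ s, a i) ^ θ * (∑ i ∈ s, b i) ^ (1 - θ))]
  exact sum_le_sum fun i hi => rpow_mul_rpow_le_weighted hθ₀ hθ₁ (ha i hi) (hb i hi) hA hB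

theorem div_sum_eq_div_sum_of_sum_rpow_mul_rpow_eq (hθ₀ : 0 < θ) (hθ₁ : θ < 1)
    (ha : ∀ i ∈ s, 0 ≤ a i) (hb : ∀ i ∈ s, 0 ≤ b i) (hA : 0 < ∑ i ∈ s, a i)
    (hB : 0 < ∑ i ∈ s, b i)
    (h : ∑ i ∈ s, a i ^ θ * b i ^ (1 - θ) = (∑ i ∈ s, a i) ^ θ * (∑ i ∈ s, b i) ^ (1 - θ)) :
    ∀ i ∈ s, a i / ∑ i ∈ s, a i = b i / ∑ i ∈ s, b i := by
  rw [← sum_mul_weighted_div_sum θ hA hB ((∑ i ∈ s, a i) ^ θ * (∑ i ∈ s, b i) ^ (1 - θ)),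
    sum_eq_sum_iff_of_le fun i hi =>
      rpow_mul_rpow_le_weighted hθ₀.le hθ₁.le (ha i hi) (hb i hi) hA hB] at h
  exact fun i hi => (rpow_mul_rpow_eq_weighted_iff hθ₀ hθ₁ (ha i hi) (hb i hi) hA hB).mp (h i hi)

end Holder

lemma sq_rpow_div_two {x : ℝ} (hx : 0 ≤ x) (α : ℝ) : (x ^ 2) ^ (α / 2) = x ^ α := by
  rw [← rpow_natCast_mul hx]
  norm_num [mul_div_cancel₀]

lemma abs_rpow_eq_rpow_mul_rpow {α β a t : ℝ} (hα₀ : 0 < α) (hβα : β * (2 - α) = α)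
    (ht : 0 ≤ t) (hat : a ≠ 0 → 0 < t) :
    |a| ^ α = (a ^ 2 / t) ^ (α / 2) * (t ^ β) ^ (1 - α / 2) := by
  rcases eq_or_ne a 0 with rfl | ha
  · simp [zero_rpow hα₀.ne', zero_rpow (half_pos hα₀).ne']
  have ht₀ := hat ha
  rw [div_rpow (sq_nonneg a) ht, ← rpow_mul ht, show β * (1 - α / 2) = α / 2 by linarith,
    ← sq_abs, sq_rpow_div_two (abs_nonneg a), div_mul_cancel₀ _ (rpow_pos_of_pos ht₀ _).ne']

lemma rpow_div_two_mul_rpow_rpow {α β A B : ℝ} (hβα : β * (2 - α) = α) (hA : 0 ≤ A)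
    (hB : 0 ≤ B) :
    A ^ (α / 2) * (B ^ β) ^ (1 - α / 2) = (A * B) ^ (α / 2) := by
  rw [← rpow_mul hB, show β * (1 - α / 2) = α / 2 by linarith, mul_rpow hA hB]

lemma sq_div_abs_rpow {α : ℝ} (hα : α ≠ 0) (a : ℝ) : a ^ 2 / |a| ^ (2 - α) = |a| ^ α := by
  rcases eq_or_ne a 0 with rfl | ha
  · simp [zero_rpow hα]
  rw [← sq_abs, ← rpow_two, ← rpow_sub (abs_pos.mpr ha), sub_sub_cancel]

lemma le_add_div_two_of_sq_le_mul {N A B : ℝ} (hA : 0 ≤ A) (hB : 0 ≤ B) (h : N ^ 2 ≤ A * B) :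
    N ≤ (A + B) / 2 := by
  nlinarith [sq_nonneg (A - B)]

lemma eq_of_sq_le_mul_of_add_div_two_eq {N A B : ℝ} (h : N ^ 2 ≤ A * B)
    (heq : (A + B) / 2 = N) : A = N ∧ B = N := by
  subst heq
  have hAB : A = B := by nlinarith [sq_nonneg (A - B)]
  constructor <;> linarith

lemma rpow_add_one_eq_of_div_eq_div {β c t N : ℝ} (hβ : 0 < β) (hN : 0 < N) (ht : 0 ≤ t)
    (hct : c ≠ 0 → 0 < t) (h : c / t / N = t ^ β / N ^ β) : t ^ (β + 1) = c * N ^ β / N := by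
  rw [rpow_add_one' ht (by linarith)]
  rcases eq_or_ne c 0 with rfl | hc
  · have htβ : t ^ β = 0 := by
      simpa [(rpow_pos_of_pos hN β).ne'] using h.symm
    simp [htβ]
  · have ht₀ := hct hc
    have hNβ := rpow_pos_of_pos hN β
    field_simp at h ⊢
    linarith

section LpQuasiNorm

variable {p : ℕ} {α β γ : ℝ} {y : Fin p → ℝ}

lemma lpQuasiNorm_nonneg (α : ℝ) (y : Fin p → ℝ) : 0 ≤ lpQuasiNorm α y :=
  rpow_nonneg (sum_nonneg fun _ _ => rpow_nonneg (abs_nonneg _) _) _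

lemma lpQuasiNorm_pos (hy : y ≠ 0) : 0 < lpQuasiNorm α y := by
  obtain ⟨j, hj⟩ := Function.ne_iff.mp hy
  exact rpow_pos_of_pos (sum_pos' (fun i _ => rpow_nonneg (abs_nonneg _) _)
    ⟨j, mem_univ _, rpow_pos_of_pos (abs_pos.mpr hj) _⟩) _

lemma lpQuasiNorm_rpow (hα : α ≠ 0) (y : Fin p → ℝ) :
    lpQuasiNorm α y ^ α = ∑ j, |y j| ^ α := by
  rw [lpQuasiNorm, one_div, rpow_inv_rpow (sum_nonneg fun _ _ => rpow_nonneg (abs_nonneg _) _) hα]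

lemma lpQuasiNorm_mul_const (hβ : β ≠ 0) {c : ℝ} (hc : 0 ≤ c) (y : Fin p → ℝ) :
    lpQuasiNorm β (fun j => y j * c) = lpQuasiNorm β y * c := by
  simp only [lpQuasiNorm, abs_mul, abs_of_nonneg hc, mul_rpow (abs_nonneg _) hc]
  rw [← sum_mul, mul_rpow (sum_nonneg fun _ _ => rpow_nonneg (abs_nonneg _) _) (rpow_nonneg hc _),
    ← rpow_mul hc, mul_one_div_cancel hβ, rpow_one]

lemma lpQuasiNorm_abs_rpow (hγ : γ ≠ 0) (β : ℝ) (y : Fin p → ℝ) :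
    lpQuasiNorm β (fun j => |y j| ^ γ) = lpQuasiNorm (β * γ) y ^ γ := by
  simp only [lpQuasiNorm, abs_of_nonneg (rpow_nonneg (abs_nonneg _) _), ← rpow_mul (abs_nonneg _)]
  rw [← rpow_mul (sum_nonneg fun _ _ => rpow_nonneg (abs_nonneg _) _), mul_comm β γ,
    one_div_mul_eq_div, div_mul_cancel_left₀ hγ, one_div]

lemma lpQuasiNorm_rpow_of_nonneg (hβ : β ≠ 0) (hy : ∀ j, 0 ≤ y j) :
    lpQuasiNorm β y ^ β = ∑ j, y j ^ β := by
  simp only [lpQuasiNorm_rpow hβ, abs_of_nonneg (hy _)]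

end LpQuasiNorm

noncomputable def varMinimizer {p : ℕ} (α : ℝ) (y : Fin p → ℝ) : Fin p → ℝ :=
  fun j => |y j| ^ (2 - α) * lpQuasiNorm α y ^ (α - 1)

section Variational

variable {p : ℕ} {α β : ℝ} {y z : Fin p → ℝ}

lemma varObj_eq_top {j : Fin p} (hy : y j ≠ 0) (hz : z j = 0) : varObj β y z = ⊤ := by
  have hterm : ENNReal.ofReal (y j ^ 2) / ENNReal.ofReal (z j) = ⊤ := by
    rw [hz, ENNReal.ofReal_zero, ENNReal.div_zero (ENNReal.ofReal_pos.mpr (by positivity)).ne']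
  rw [varObj, ENNReal.sum_eq_top.mpr ⟨j, mem_univ _, hterm⟩, ENNReal.mul_top (by norm_num),
    top_add]

lemma pos_of_varObj_ne_top (hz : ∀ j, 0 ≤ z j) (h : varObj β y z ≠ ⊤) (j : Fin p)
    (hy : y j ≠ 0) : 0 < z j :=
  (hz j).lt_of_ne' fun h0 => h (varObj_eq_top hy h0)

lemma varObj_eq_ofReal (hz : ∀ j, 0 ≤ z j) (hyz : ∀ j, y j ≠ 0 → 0 < z j) :
    varObj β y z = ENNReal.ofReal ((∑ j, y j ^ 2 / z j + lpQuasiNorm β z) / 2) := by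
  have hterm (j : Fin p) :
      ENNReal.ofReal (y j ^ 2) / ENNReal.ofReal (z j) = ENNReal.ofReal (y j ^ 2 / z j) := by
    rcases eq_or_ne (y j) 0 with hy | hy
    · simp [hy]
    · rw [ENNReal.ofReal_div_of_pos (hyz j hy)]
  rw [varObj, sum_congr rfl fun j _ => hterm j,
    ← ENNReal.ofReal_sum_of_nonneg fun j _ => div_nonneg (sq_nonneg _) (hz j),
    ENNReal.ofReal_div_of_pos two_pos,
    ENNReal.ofReal_add (sum_nonneg fun j _ => div_nonneg (sq_nonneg _) (hz j))
      (lpQuasiNorm_nonneg β z), ENNReal.ofReal_ofNat, one_div, ENNReal.div_eq_inv_mul, mul_add]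

lemma lpQuasiNorm_rpow_eq_sum (hα₀ : 0 < α) (hβα : β * (2 - α) = α) (hz : ∀ j, 0 ≤ z j)
    (hyz : ∀ j, y j ≠ 0 → 0 < z j) :
    lpQuasiNorm α y ^ α = ∑ j, (y j ^ 2 / z j) ^ (α / 2) * (z j ^ β) ^ (1 - α / 2) := by
  rw [lpQuasiNorm_rpow hα₀.ne']
  exact sum_congr rfl fun j _ => abs_rpow_eq_rpow_mul_rpow hα₀ hβα (hz j) (hyz j)

lemma sum_sq_div_pos (hy : y ≠ 0) (hz : ∀ j, 0 ≤ z j) (hyz : ∀ j, y j ≠ 0 → 0 < z j) :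
    0 < ∑ j, y j ^ 2 / z j :=
  let ⟨j, hj⟩ := Function.ne_iff.mp hy
  sum_pos' (fun i _ => div_nonneg (sq_nonneg _) (hz i))
    ⟨j, mem_univ _, div_pos (pow_two_pos_of_ne_zero hj) (hyz j hj)⟩

lemma sum_rpow_pos (hy : y ≠ 0) (hz : ∀ j, 0 ≤ z j) (hyz : ∀ j, y j ≠ 0 → 0 < z j) :
    0 < ∑ j, z j ^ β :=
  let ⟨j, hj⟩ := Function.ne_iff.mp hy
  sum_pos' (fun i _ => rpow_nonneg (hz i) _) ⟨j, mem_univ _, rpow_pos_of_pos (hyz j hj) _⟩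

lemma sq_lpQuasiNorm_le_mul (hα₀ : 0 < α) (hα₂ : α < 2) (hβα : β * (2 - α) = α) (hy : y ≠ 0)
    (hz : ∀ j, 0 ≤ z j) (hyz : ∀ j, y j ≠ 0 → 0 < z j) :
    lpQuasiNorm α y ^ 2 ≤ (∑ j, y j ^ 2 / z j) * lpQuasiNorm β z := by
  have hβ : β ≠ 0 := left_ne_zero_of_mul (hβα.trans_ne hα₀.ne')
  have holder := sum_rpow_mul_rpow_le (s := univ) (half_pos hα₀).le (by linarith)
    (fun j _ => div_nonneg (sq_nonneg (y j)) (hz j)) (fun j _ => rpow_nonneg (hz j) β)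
    (sum_sq_div_pos hy hz hyz) (sum_rpow_pos hy hz hyz)
  rw [← lpQuasiNorm_rpow_eq_sum hα₀ hβα hz hyz, ← lpQuasiNorm_rpow_of_nonneg hβ hz,
    rpow_div_two_mul_rpow_rpow hβα (sum_sq_div_pos hy hz hyz).le (lpQuasiNorm_nonneg β z)] at holder
  rw [← sq_rpow_div_two (lpQuasiNorm_nonneg α y)] at holder
  exact (rpow_le_rpow_iff (sq_nonneg _)
    (mul_nonneg (sum_sq_div_pos hy hz hyz).le (lpQuasiNorm_nonneg β z)) (half_pos hα₀)).mp holder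

lemma div_eq_div_of_sum_sq_div_eq_of_lpQuasiNorm_eq (hα₀ : 0 < α) (hα₂ : α < 2)
    (hβα : β * (2 - α) = α) (hy : y ≠ 0) (hz : ∀ j, 0 ≤ z j) (hyz : ∀ j, y j ≠ 0 → 0 < z j)
    (hA : ∑ j, y j ^ 2 / z j = lpQuasiNorm α y) (hB : lpQuasiNorm β z = lpQuasiNorm α y)
    (j : Fin p) : y j ^ 2 / z j / lpQuasiNorm α y = z j ^ β / lpQuasiNorm α y ^ β := by
  have hβ : β ≠ 0 := left_ne_zero_of_mul (hβα.trans_ne hα₀.ne')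
  have holder_eq : ∑ j, (y j ^ 2 / z j) ^ (α / 2) * (z j ^ β) ^ (1 - α / 2) =
      (∑ j, y j ^ 2 / z j) ^ (α / 2) * (∑ j, z j ^ β) ^ (1 - α / 2) := by
    rw [← lpQuasiNorm_rpow_eq_sum hα₀ hβα hz hyz, ← lpQuasiNorm_rpow_of_nonneg hβ hz,
      rpow_div_two_mul_rpow_rpow hβα (sum_sq_div_pos hy hz hyz).le (lpQuasiNorm_nonneg β z), hA, hB,
      ← sq, sq_rpow_div_two (lpQuasiNorm_nonneg α y)]
  have := div_sum_eq_div_sum_of_sum_rpow_mul_rpow_eq (half_pos hα₀) (by linarith)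
    (fun j _ => div_nonneg (sq_nonneg (y j)) (hz j)) (fun j _ => rpow_nonneg (hz j) β)
    (sum_sq_div_pos hy hz hyz) (sum_rpow_pos hy hz hyz) holder_eq j (mem_univ j)
  rwa [hA, ← lpQuasiNorm_rpow_of_nonneg hβ hz, hB] at this

lemma ofReal_lpQuasiNorm_le_varObj (hα₀ : 0 < α) (hα₂ : α < 2) (hβα : β * (2 - α) = α)
    (hy : y ≠ 0) (hz : ∀ j, 0 ≤ z j) : ENNReal.ofReal (lpQuasiNorm α y) ≤ varObj β y z := by
  by_cases htop : varObj β y z = ⊤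
  · exact htop ▸ le_top
  have hyz := pos_of_varObj_ne_top hz htop
  rw [varObj_eq_ofReal hz hyz]
  exact ENNReal.ofReal_le_ofReal <| le_add_div_two_of_sq_le_mul (sum_sq_div_pos hy hz hyz).le
    (lpQuasiNorm_nonneg β z) (sq_lpQuasiNorm_le_mul hα₀ hα₂ hβα hy hz hyz)

lemma rpow_add_one_eq_of_varObj_eq (hα₀ : 0 < α) (hα₂ : α < 2) (hβα : β * (2 - α) = α)
    (hy : y ≠ 0) (hz : ∀ j, 0 ≤ z j) (h : varObj β y z = ENNReal.ofReal (lpQuasiNorm α y))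
    (j : Fin p) : z j ^ (β + 1) = y j ^ 2 * lpQuasiNorm α y ^ β / lpQuasiNorm α y := by
  have hyz := pos_of_varObj_ne_top hz (h ▸ ENNReal.ofReal_ne_top)
  rw [varObj_eq_ofReal hz hyz, ENNReal.ofReal_eq_ofReal_iff (div_nonneg (add_nonneg
    (sum_sq_div_pos hy hz hyz).le (lpQuasiNorm_nonneg β z)) zero_le_two)
    (lpQuasiNorm_nonneg α y)] at h
  obtain ⟨hA, hB⟩ :=
    eq_of_sq_le_mul_of_add_div_two_eq (sq_lpQuasiNorm_le_mul hα₀ hα₂ hβα hy hz hyz) h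
  exact rpow_add_one_eq_of_div_eq_div (pos_of_mul_pos_left (hβα ▸ hα₀) (by linarith))
    (lpQuasiNorm_pos hy) (hz j) (fun hj => hyz j (by simpa using hj))
    (div_eq_div_of_sum_sq_div_eq_of_lpQuasiNorm_eq hα₀ hα₂ hβα hy hz hyz hA hB j)

lemma varMinimizer_nonneg (α : ℝ) (y : Fin p → ℝ) (j : Fin p) : 0 ≤ varMinimizer α y j :=
  mul_nonneg (rpow_nonneg (abs_nonneg _) _) (rpow_nonneg (lpQuasiNorm_nonneg α y) _)

lemma varMinimizer_pos (hy : y ≠ 0) {j : Fin p} (hj : y j ≠ 0) : 0 < varMinimizer α y j :=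
  mul_pos (rpow_pos_of_pos (abs_pos.mpr hj) _) (rpow_pos_of_pos (lpQuasiNorm_pos hy) _)

lemma sum_sq_div_varMinimizer (hα : α ≠ 0) (hy : y ≠ 0) :
    ∑ j, y j ^ 2 / varMinimizer α y j = lpQuasiNorm α y := by
  simp only [varMinimizer, ← div_div, sq_div_abs_rpow hα]
  rw [← sum_div, ← lpQuasiNorm_rpow hα, ← rpow_sub (lpQuasiNorm_pos hy), sub_sub_cancel,
    rpow_one]

lemma lpQuasiNorm_varMinimizer (hα₀ : 0 < α) (hα₂ : α < 2) (hβα : β * (2 - α) = α) (hy : y ≠ 0) :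
    lpQuasiNorm β (varMinimizer α y) = lpQuasiNorm α y := by
  have hβ : β ≠ 0 := left_ne_zero_of_mul (hβα.trans_ne hα₀.ne')
  unfold varMinimizer
  rw [lpQuasiNorm_mul_const hβ (rpow_nonneg (lpQuasiNorm_nonneg α y) _),
    lpQuasiNorm_abs_rpow (by linarith : 2 - α ≠ 0), hβα, ← rpow_add (lpQuasiNorm_pos hy),
    show 2 - α + (α - 1) = 1 by ring, rpow_one]

lemma varObj_varMinimizer (hα₀ : 0 < α) (hα₂ : α < 2) (hβα : β * (2 - α) = α) (hy : y ≠ 0) :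
    varObj β y (varMinimizer α y) = ENNReal.ofReal (lpQuasiNorm α y) := by
  rw [varObj_eq_ofReal (varMinimizer_nonneg α y) (fun _ => varMinimizer_pos hy),
    sum_sq_div_varMinimizer hα₀.ne' hy, lpQuasiNorm_varMinimizer hα₀ hα₂ hβα hy, add_self_div_two]

lemma eq_varMinimizer_of_varObj_eq (hα₀ : 0 < α) (hα₂ : α < 2) (hβα : β * (2 - α) = α)
    (hy : y ≠ 0) (hz : ∀ j, 0 ≤ z j) (h : varObj β y z = ENNReal.ofReal (lpQuasiNorm α y)) :
    z = varMinimizer α y := by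
  funext j
  have hβ₀ : 0 < β := pos_of_mul_pos_left (hβα ▸ hα₀) (by linarith)
  refine (rpow_left_inj (hz j) (varMinimizer_nonneg α y j) (by linarith : β + 1 ≠ 0)).mp ?_
  rw [rpow_add_one_eq_of_varObj_eq hα₀ hα₂ hβα hy hz h,
    rpow_add_one_eq_of_varObj_eq hα₀ hα₂ hβα hy (varMinimizer_nonneg α y)
      (varObj_varMinimizer hα₀ hα₂ hβα hy)]

end Variational

/-- For `y ≠ 0`, `α ∈ (0,2)`, `β = α/(2-α)`, the minimum in the variational formula
`‖y‖_α = min_z (1/2)∑ y_j²/z_j + (1/2)‖z‖_β` is uniquely attained at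
`z_j = |y_j|^{2-α} ‖y‖_α^{α-1}`. -/
theorem sparse_pca_variational_unique_minimizer {p : ℕ} (α β : ℝ)
    (hα : α ∈ Set.Ioo (0 : ℝ) 2) (hβ : β = α / (2 - α))
    (y : Fin p → ℝ) (hy : y ≠ 0) :
    (∀ z : Fin p → ℝ, (∀ j, 0 ≤ z j) →
        ENNReal.ofReal (lpQuasiNorm α y) ≤ varObj β y z) ∧
    varObj β y (fun j => |y j| ^ (2 - α) * lpQuasiNorm α y ^ (α - 1))
        = ENNReal.ofReal (lpQuasiNorm α y) ∧
    (∀ z : Fin p → ℝ, (∀ j, 0 ≤ z j) →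
        varObj β y z = ENNReal.ofReal (lpQuasiNorm α y) →
        z = fun j => |y j| ^ (2 - α) * lpQuasiNorm α y ^ (α - 1)) := by
  obtain ⟨hα₀, hα₂⟩ := hα
  have hβα : β * (2 - α) = α := by
    rw [hβ, div_mul_cancel₀ _ (by linarith)]
  exact ⟨fun z hz => ofReal_lpQuasiNorm_le_varObj hα₀ hα₂ hβα hy hz,
    varObj_varMinimizer hα₀ hα₂ hβα hy,
    fun z hz h => eq_varMinimizer_of_varObj_eq hα₀ hα₂ hβα hy hz h⟩
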